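/- Let A be an m×n matrix, Q an m×r matrix with orthonormal columns, Q⊥ its orthogonal complement, and Y an m×s matrix with Y^T Q of full column rank. Then ‖A − Q (Y^T Q)^† Y^T A‖_F ≤ (1 + ‖(Y^T Q)^†‖₂ ‖Y‖₂) ‖Q⊥^T A‖_F. -/

import Mathlib

open Matrix

noncomputable def spec {m n : Type*} [Fintype m] [Fintype n] [DecidableEq n]
    (A : Matrix m n ℝ) : ℝ :=
  ‖LinearMap.toContinuousLinearMap (Matrix.toEuclideanLin A)‖

noncomputable def frobM {m n : Type*} [Fintype m] [Fintype n] (A : Matrix m n ℝ) : ℝ :=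
  Real.sqrt (∑ i, ∑ j, (A i j)^2)

/-- Penrose conditions: `Ap` is the Moore–Penrose pseudoinverse of `A`. -/
def IsMP {m n : Type*} [Fintype m] [Fintype n] (A : Matrix m n ℝ) (Ap : Matrix n m ℝ) : Prop :=
  A * Ap * A = A ∧ Ap * A * Ap = Ap ∧ (A * Ap)ᵀ = A * Ap ∧ (Ap * A)ᵀ = Ap * A

abbrev Tensor {d : ℕ} (n : Fin d → ℕ) := ((i : Fin d) → Fin (n i)) → ℝ

noncomputable def frobT {d : ℕ} {n : Fin d → ℕ} (A : Tensor n) : ℝ :=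
  Real.sqrt (∑ idx, (A idx)^2)

def modeProd {d : ℕ} {n : Fin d → ℕ} (k : Fin d) {p : ℕ}
    (A : Tensor n) (X : Matrix (Fin p) (Fin (n k)) ℝ) :
    Tensor (Function.update n k p) :=
  fun idx => ∑ j : Fin (n k),
    X (Fin.cast (Function.update_self k p n) (idx k)) j *
      A (fun i => if h : i = k then Fin.cast (congrArg n h).symm j
                  else Fin.cast (Function.update_of_ne h p n) (idx i))

def modeProdSq {d : ℕ} {n : Fin d → ℕ} (k : Fin d)
    (A : Tensor n) (X : Matrix (Fin (n k)) (Fin (n k)) ℝ) : Tensor n :=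
  fun idx => ∑ j : Fin (n k), X (idx k) j * A (Function.update idx k j)

def applyUpTo {d : ℕ} {n : Fin d → ℕ} (P : ∀ k : Fin d, Matrix (Fin (n k)) (Fin (n k)) ℝ)
    (A : Tensor n) (m : ℕ) : Tensor n :=
  ((List.finRange d).take m).foldl (fun B i => modeProdSq i B (P i)) A

def matricize {d : ℕ} {n : Fin d → ℕ} (k : Fin d) (A : Tensor n) :
    Matrix (Fin (n k)) ((i : {i : Fin d // i ≠ k}) → Fin (n i)) ℝ :=
  fun a c => A (fun i => if h : i = k then Fin.cast (congrArg n h).symm a else c ⟨i, h⟩)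

def multiProd {d : ℕ} {n m : Fin d → ℕ} (A : Tensor n)
    (X : ∀ i, Matrix (Fin (m i)) (Fin (n i)) ℝ) : Tensor m :=
  fun idx => ∑ jdx : ∀ i, Fin (n i), (∏ i, X i (idx i) (jdx i)) * A jdx

def kronExcept {d : ℕ} {n m : Fin d → ℕ} (k : Fin d)
    (X : ∀ i, Matrix (Fin (m i)) (Fin (n i)) ℝ) :
    Matrix ((i : {i : Fin d // i ≠ k}) → Fin (m i)) ((i : {i : Fin d // i ≠ k}) → Fin (n i)) ℝ :=
  fun r c => ∏ i : {i : Fin d // i ≠ k}, X i.1 (r i) (c i)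

def kronAll {d : ℕ} {n m : Fin d → ℕ}
    (X : ∀ i, Matrix (Fin (m i)) (Fin (n i)) ℝ) :
    Matrix ((i : Fin d) → Fin (m i)) ((i : Fin d) → Fin (n i)) ℝ :=
  fun r c => ∏ i, X i (r i) (c i)


open scoped Matrix.Norms.L2Operator

section auxSpec
variable {m n p : Type*} [Fintype m] [Fintype n] [Fintype p]
  [DecidableEq m] [DecidableEq n] [DecidableEq p]

set_option linter.unusedSectionVars false

lemma spec_eq_norm (A : Matrix m n ℝ) : spec A = ‖A‖ := rfl

lemma spec_nonneg (A : Matrix m n ℝ) : 0 ≤ spec A := norm_nonneg _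

lemma spec_mul_le (A : Matrix m n ℝ) (B : Matrix n p ℝ) :
    spec (A * B) ≤ spec A * spec B := Matrix.l2_opNorm_mul A B

lemma spec_transpose (A : Matrix m n ℝ) : spec Aᵀ = spec A := by
  simp only [spec_eq_norm]
  rw [← Matrix.l2_opNorm_conjTranspose A]; congr 1

lemma spec_one_le : spec (1 : Matrix n n ℝ) ≤ 1 := by
  rw [spec_eq_norm, Matrix.l2_opNorm_def]
  apply ContinuousLinearMap.opNorm_le_bound _ zero_le_one
  intro x
  simp [Matrix.toEuclideanLin_apply]

lemma spec_sub_le (A B : Matrix m n ℝ) : spec (A - B) ≤ spec A + spec B := by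
  simp only [spec_eq_norm]; exact norm_sub_le A B

lemma spec_orth_le_one (Q : Matrix m n ℝ) (hQ : Qᵀ * Q = 1) : spec Q ≤ 1 := by
  have h : spec Q * spec Q ≤ 1 := by
    have h1 : (Qᴴ : Matrix n m ℝ) = Qᵀ := by congr 1
    have := Matrix.l2_opNorm_conjTranspose_mul_self Q
    rw [h1, hQ] at this
    rw [spec_eq_norm, ← this]
    exact spec_one_le
  nlinarith [spec_nonneg Q]

lemma frob_nonneg (A : Matrix m n ℝ) : 0 ≤ frobM A := Real.sqrt_nonneg _

lemma frob_mul_le (A : Matrix m n ℝ) (B : Matrix n p ℝ) :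
    frobM (A * B) ≤ spec A * frobM B := by
  have key : ∀ j : p, ∑ i, ((A * B) i j)^2 ≤ spec A ^ 2 * ∑ i, (B i j)^2 := by
    intro j
    have h := Matrix.l2_opNorm_mulVec A ((WithLp.equiv 2 (n → ℝ)).symm (fun k => B k j))
    have hnormL : ‖(EuclideanSpace.equiv m ℝ).symm (A *ᵥ (WithLp.equiv 2 (n → ℝ)).symm (fun k => B k j))‖
        = Real.sqrt (∑ i, ((A * B) i j)^2) := by
      rw [EuclideanSpace.norm_eq]
      congr 1
      apply Finset.sum_congr rfl
      intro i _
      simp [Real.norm_eq_abs, sq_abs, Matrix.mulVec, Matrix.mul_apply, dotProduct]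
    have hnormR : ‖(WithLp.equiv 2 (n → ℝ)).symm (fun k => B k j)‖
        = Real.sqrt (∑ i, (B i j)^2) := by
      rw [EuclideanSpace.norm_eq]
      congr 1
      apply Finset.sum_congr rfl
      intro i _
      simp [Real.norm_eq_abs, sq_abs]
    rw [hnormL, hnormR, ← spec_eq_norm] at h
    have h2 : Real.sqrt (∑ i, ((A*B) i j)^2) ^ 2 ≤ (spec A * Real.sqrt (∑ i, (B i j)^2))^2 :=
      pow_le_pow_left₀ (Real.sqrt_nonneg _) h 2
    rw [Real.sq_sqrt (by positivity), mul_pow, Real.sq_sqrt (by positivity)] at h2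
    exact h2
  have hsum : ∑ i, ∑ j, ((A*B) i j)^2 ≤ spec A ^ 2 * ∑ i, ∑ j, (B i j)^2 := by
    rw [Finset.sum_comm, Finset.sum_comm (γ := n), Finset.mul_sum]
    exact Finset.sum_le_sum fun j _ => key j
  unfold frobM
  calc Real.sqrt (∑ i, ∑ j, ((A*B) i j)^2) ≤ Real.sqrt (spec A ^2 * ∑ i, ∑ j, (B i j)^2) :=
        Real.sqrt_le_sqrt hsum
    _ = spec A * Real.sqrt (∑ i, ∑ j, (B i j)^2) := by
        rw [Real.sqrt_mul (by positivity), Real.sqrt_sq (spec_nonneg A)]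

end auxSpec

lemma aux_GM (r s : ℕ) (M : Matrix (Fin s) (Fin r) ℝ) (G : Matrix (Fin r) (Fin s) ℝ)
    (hG : IsMP M G) (hrank : M.rank = r) : G * M = 1 := by
  have hker : LinearMap.ker M.mulVecLin = ⊥ := by
    have hft := LinearMap.finrank_range_add_finrank_ker M.mulVecLin
    rw [Matrix.rank] at hrank
    have hd : Module.finrank ℝ (Fin r → ℝ) = r := by simp
    rw [hrank, hd] at hft
    have h0 : Module.finrank ℝ (LinearMap.ker M.mulVecLin) = 0 := by omega
    exact Submodule.finrank_eq_zero.mp h0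
  have hinj : Function.Injective M.mulVecLin := LinearMap.ker_eq_bot.mp hker
  have hv : ∀ v, (G * M) *ᵥ v = v := by
    intro v
    apply hinj
    show M *ᵥ ((G * M) *ᵥ v) = M *ᵥ v
    rw [Matrix.mulVec_mulVec, ← Matrix.mul_assoc, hG.1]
  ext i j
  have := congrFun (hv (Pi.single j 1)) i
  simpa [Matrix.mulVec_single, Matrix.one_apply, Pi.single_apply, eq_comm] using this

theorem stmt19 (m n r s : ℕ)
    (A : Matrix (Fin m) (Fin n) ℝ)
    (Q : Matrix (Fin m) (Fin r) ℝ) (Qp : Matrix (Fin m) (Fin (m - r)) ℝ)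
    (Y : Matrix (Fin m) (Fin s) ℝ) (G : Matrix (Fin r) (Fin s) ℝ)
    (hQ : Qᵀ * Q = 1) (hQp : Qpᵀ * Qp = 1) (hcompl : Q * Qᵀ + Qp * Qpᵀ = 1)
    (hG : IsMP (Yᵀ * Q) G) (hrank : (Yᵀ * Q).rank = r) :
    frobM (A - Q * G * Yᵀ * A) ≤ (1 + spec G * spec Y) * frobM (Qpᵀ * A) := by
  have hGM : G * (Yᵀ * Q) = 1 := aux_GM r s (Yᵀ * Q) G hG hrank
  have hQpQp : Qp * Qpᵀ = 1 - Q * Qᵀ := eq_sub_of_add_eq' hcompl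
  have expand : (1 - Q * G * Yᵀ) * (Qp * Qpᵀ) = 1 - Q * G * Yᵀ := by
    rw [hQpQp, Matrix.mul_sub, Matrix.mul_one, Matrix.sub_mul, Matrix.one_mul]
    have h2 : Q * G * Yᵀ * (Q * Qᵀ) = Q * Qᵀ := by
      calc Q * G * Yᵀ * (Q * Qᵀ) = Q * (G * (Yᵀ * Q)) * Qᵀ := by
            simp only [Matrix.mul_assoc]
        _ = Q * Qᵀ := by rw [hGM, Matrix.mul_one]
    rw [h2]
    abel
  have key : A - Q * G * Yᵀ * A = ((1 - Q * G * Yᵀ) * Qp) * (Qpᵀ * A) := by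
    calc A - Q * G * Yᵀ * A = (1 - Q * G * Yᵀ) * A := by
          rw [Matrix.sub_mul, Matrix.one_mul]
      _ = ((1 - Q * G * Yᵀ) * (Qp * Qpᵀ)) * A := by rw [expand]
      _ = ((1 - Q * G * Yᵀ) * Qp) * (Qpᵀ * A) := by simp only [Matrix.mul_assoc]
  have hs : spec ((1 - Q * G * Yᵀ) * Qp) ≤ 1 + spec G * spec Y := by
    have hq : spec Q ≤ 1 := spec_orth_le_one Q hQ
    have hqp : spec Qp ≤ 1 := spec_orth_le_one Qp hQp
    have h3 : spec (Q * G * Yᵀ) ≤ spec G * spec Y := by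
      calc spec (Q * G * Yᵀ) ≤ spec (Q * G) * spec Yᵀ := spec_mul_le _ _
        _ ≤ spec Q * spec G * spec Yᵀ :=
            mul_le_mul_of_nonneg_right (spec_mul_le _ _) (spec_nonneg _)
        _ = spec Q * spec G * spec Y := by rw [spec_transpose]
        _ ≤ 1 * spec G * spec Y := by
            have := spec_nonneg G; have := spec_nonneg Y
            nlinarith [mul_nonneg (spec_nonneg G) (spec_nonneg Y)]
        _ = spec G * spec Y := by ring
    calc spec ((1 - Q * G * Yᵀ) * Qp) ≤ spec (1 - Q * G * Yᵀ) * spec Qp := spec_mul_le _ _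
      _ ≤ spec (1 - Q * G * Yᵀ) * 1 :=
          mul_le_mul_of_nonneg_left hqp (spec_nonneg _)
      _ = spec (1 - Q * G * Yᵀ) := mul_one _
      _ ≤ spec (1 : Matrix (Fin m) (Fin m) ℝ) + spec (Q * G * Yᵀ) := spec_sub_le _ _
      _ ≤ 1 + spec G * spec Y := add_le_add spec_one_le h3
  calc frobM (A - Q * G * Yᵀ * A)
      = frobM (((1 - Q * G * Yᵀ) * Qp) * (Qpᵀ * A)) := by rw [key]
    _ ≤ spec ((1 - Q * G * Yᵀ) * Qp) * frobM (Qpᵀ * A) := frob_mul_le _ _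
    _ ≤ (1 + spec G * spec Y) * frobM (Qpᵀ * A) :=
        mul_le_mul_of_nonneg_right hs (frob_nonneg _)
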